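/- The set {⟨û₂, w(û₆)⟩ : w ∈ W(E₆)} equals {−1, −1/4, 1/2}. (Equivalently: the possible distances between a vertex of type 2 and a vertex of type 6 of the Coxeter complex of type E₆ are exactly π, arccos(−1/4) and π/3.) -/

import Mathlib

noncomputable section

open scoped RealInnerProductSpace

/-- Euclidean space `ℝ⁸`. -/
abbrev E8Space := EuclideanSpace ℝ (Fin 8)

/-- The fundamental root vectors of the root system of type `E₆` inside `ℝ⁸`:
`r₁ = ½(1,1,1,−1,−1,−1,−1,−1)`, `rᵢ = eᵢ − eᵢ₋₁` for `2 ≤ i ≤ 5`, and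
`r₆ = ½(1,1,1,1,−1,1,1,1)` (here indexed by `Fin 6`, with `j = 0` corresponding
to `r₁` and `j = 5` to `r₆`). -/
def E6root : Fin 6 → E8Space := fun j =>
  if j = 0 then WithLp.toLp 2 (fun i : Fin 8 => if (i : ℕ) < 3 then (1 : ℝ) / 2 else -(1 / 2))
  else if j = 5 then WithLp.toLp 2 (fun i : Fin 8 => if (i : ℕ) = 4 then -(1 : ℝ) / 2 else 1 / 2)
  else WithLp.toLp 2 (fun i : Fin 8 => if (i : ℕ) = (j : ℕ) then (1 : ℝ)
        else if (i : ℕ) + 1 = (j : ℕ) then -1 else 0)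

/-- The Weyl group `W(E₆)`: the subgroup of linear isometries of `ℝ⁸` generated by the
reflections `s_r(x) = x − 2(⟨x,r⟩/⟨r,r⟩)r` in the fundamental root vectors of type `E₆`.
These generators preserve the subspace `V = {x : x₆ = x₇ = x₈}` realizing the Coxeter
complex of type `E₆`. -/
def WeylE6 : Subgroup (E8Space ≃ₗᵢ[ℝ] E8Space) :=
  Subgroup.closure
    { f | ∃ j : Fin 6, ∀ x : E8Space,
        f x = x - ((2 * ⟪x, E6root j⟫ / ⟪E6root j, E6root j⟫) • E6root j) }

/-- `û₂ = (−3,3,3,3,3,−1,−1,−1)/(4√3)`, a unit vector representing a vertex of type 2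
of the Coxeter complex of type `E₆`. -/
def u2hatE6 : E8Space := WithLp.toLp 2 fun i : Fin 8 =>
  (if (i : ℕ) = 0 then -3 else if (i : ℕ) < 5 then 3 else -1) / (4 * Real.sqrt 3)

/-- `û₆ = (3,3,3,3,3,1,1,1)/(4√3)`, a unit vector representing a vertex of type 6
of the Coxeter complex of type `E₆`. -/
def u6hatE6 : E8Space := WithLp.toLp 2 fun i : Fin 8 =>
  (if (i : ℕ) < 5 then 3 else 1) / (4 * Real.sqrt 3)

/-!
Scaling by `4√3` makes `û₂` and `û₆` integral. The `W(E₆)`-orbit of the integral `û₆` consists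
of the 27 weights of the minuscule representation of `E₆`: an explicit finite set of integral
vectors that each generating reflection maps into itself. Since the set is finite, its setwise
stabilizer is a subgroup, so all of `W(E₆)` preserves it. Pairing the integral `û₂` with these
27 vectors gives only `−48`, `−12` and `24`, i.e. `⟨û₂, w û₆⟩ ∈ {−1, −1/4, 1/2}`, and each value
is attained by an explicit word in the reflections.
-/

instance LinearIsometryEquiv.applyMulAction {R E : Type*} [Semiring R] [SeminormedAddCommGroup E]
    [Module R E] : MulAction (E ≃ₗᵢ[R] E) E where
  smul f x := f x
  one_smul _ := rfl
  mul_smul _ _ _ := rfl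

open Pointwise in
theorem Set.Finite.mapsTo_smul_of_mem_closure {G α : Type*} [Group G] [MulAction G α]
    {S : Set α} (hS : S.Finite) {T : Set G} (hT : ∀ g ∈ T, Set.MapsTo (g • ·) S S) {w : G}
    (hw : w ∈ Subgroup.closure T) : Set.MapsTo (w • ·) S S := by
  have hle : Subgroup.closure T ≤ MulAction.stabilizer G S :=
    (Subgroup.closure_le _).2 fun g hg => (MulAction.mem_stabilizer_set' hS).2 (hT g hg)
  exact (MulAction.mem_stabilizer_set' hS).1 (hle hw)

theorem Submodule.reflection_orthogonal_span_singleton_apply {F : Type*} [NormedAddCommGroup F]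
    [InnerProductSpace ℝ F] (r x : F) :
    (ℝ ∙ r)ᗮ.reflection x = x - (2 * ⟪x, r⟫ / ⟪r, r⟫) • r := by
  rw [reflection_orthogonal_apply, reflection_singleton_apply, real_inner_self_eq_norm_sq,
    real_inner_comm]
  simp only [RCLike.ofReal_real_eq_id, id]
  match_scalars <;> ring

def reflE6 (j : Fin 6) : E8Space ≃ₗᵢ[ℝ] E8Space := (ℝ ∙ E6root j)ᗮ.reflection

theorem WeylE6_eq_closure_range_reflE6 : WeylE6 = Subgroup.closure (Set.range reflE6) := by
  unfold WeylE6
  congr 1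
  ext f
  constructor
  · rintro ⟨j, hj⟩
    exact ⟨j, LinearIsometryEquiv.ext fun x => by
      rw [hj, reflE6, Submodule.reflection_orthogonal_span_singleton_apply]⟩
  · rintro ⟨j, rfl⟩
    exact ⟨j, Submodule.reflection_orthogonal_span_singleton_apply _⟩

theorem prod_map_reflE6_mem_WeylE6 (L : List (Fin 6)) : (L.map reflE6).prod ∈ WeylE6 := by
  rw [WeylE6_eq_closure_range_reflE6]
  refine list_prod_mem fun g hg => ?_
  obtain ⟨j, -, rfl⟩ := List.mem_map.1 hg
  exact Subgroup.subset_closure ⟨j, rfl⟩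

def toE8 (v : Fin 8 → ℤ) : E8Space := WithLp.toLp 2 fun i => (v i : ℝ)

theorem inner_toE8 (v w : Fin 8 → ℤ) : ⟪toE8 v, toE8 w⟫ = (v ⬝ᵥ w : ℤ) := by
  simp [toE8, dotProduct, PiLp.inner_apply, mul_comm]

theorem toE8_sub_smul (v w : Fin 8 → ℤ) (c : ℤ) :
    toE8 (v - c • w) = toE8 v - (c : ℝ) • toE8 w := by
  ext i
  simp [toE8]

def twiceE6root : Fin 6 → Fin 8 → ℤ :=
  ![![1, 1, 1, -1, -1, -1, -1, -1],
    ![-2, 2, 0, 0, 0, 0, 0, 0],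
    ![0, -2, 2, 0, 0, 0, 0, 0],
    ![0, 0, -2, 2, 0, 0, 0, 0],
    ![0, 0, 0, -2, 2, 0, 0, 0],
    ![1, 1, 1, 1, -1, 1, 1, 1]]

theorem E6root_eq (j : Fin 6) : E6root j = (2⁻¹ : ℝ) • toE8 (twiceE6root j) := by
  fin_cases j <;> ext i <;> fin_cases i <;> simp [E6root, toE8, twiceE6root, neg_div]

/-- The reflection in `E6root j` on integral vectors; the integer division is exact only when
`4 ∣ v ⬝ᵥ twiceE6root j`. -/
def reflInt (j : Fin 6) (v : Fin 8 → ℤ) : Fin 8 → ℤ :=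
  v - (v ⬝ᵥ twiceE6root j / 4) • twiceE6root j

theorem reflE6_toE8 {j : Fin 6} {v : Fin 8 → ℤ} (hv : 4 ∣ v ⬝ᵥ twiceE6root j) :
    reflE6 j (toE8 v) = toE8 (reflInt j v) := by
  have hnorm : ∀ j, twiceE6root j ⬝ᵥ twiceE6root j = 8 := by decide
  obtain ⟨c, hc⟩ := hv
  rw [reflE6, Submodule.reflection_orthogonal_span_singleton_apply, reflInt, toE8_sub_smul, hc,
    Int.mul_ediv_cancel_left c (by norm_num), E6root_eq, real_inner_smul_right,
    real_inner_smul_left, real_inner_smul_right, inner_toE8, inner_toE8, hc, hnorm j, smul_smul]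
  congr 2
  push_cast
  ring

/-- `4√3 • û₆` and its images under `W(E₆)`: the 27 weights of the minuscule representation
of `E₆`, scaled. -/
def minusculeOrbitE6 : Finset (Fin 8 → ℤ) :=
  {![3, 3, 3, 3, 3, 1, 1, 1], ![0, 0, 0, 0, 6, -2, -2, -2], ![0, 0, 0, 6, 0, -2, -2, -2],
   ![0, 0, 6, 0, 0, -2, -2, -2], ![0, 6, 0, 0, 0, -2, -2, -2], ![6, 0, 0, 0, 0, -2, -2, -2],
   ![-3, -3, 3, 3, 3, 1, 1, 1], ![-3, 3, -3, 3, 3, 1, 1, 1], ![-3, 3, 3, -3, 3, 1, 1, 1],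
   ![-3, 3, 3, 3, -3, 1, 1, 1], ![3, -3, -3, 3, 3, 1, 1, 1], ![3, -3, 3, -3, 3, 1, 1, 1],
   ![3, -3, 3, 3, -3, 1, 1, 1], ![3, 3, -3, -3, 3, 1, 1, 1], ![3, 3, -3, 3, -3, 1, 1, 1],
   ![3, 3, 3, -3, -3, 1, 1, 1], ![-6, 0, 0, 0, 0, -2, -2, -2], ![0, -6, 0, 0, 0, -2, -2, -2],
   ![0, 0, -6, 0, 0, -2, -2, -2], ![0, 0, 0, -6, 0, -2, -2, -2], ![0, 0, 0, 0, -6, -2, -2, -2],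
   ![0, 0, 0, 0, 0, 4, 4, 4], ![-3, -3, -3, -3, 3, 1, 1, 1], ![-3, -3, -3, 3, -3, 1, 1, 1],
   ![-3, -3, 3, -3, -3, 1, 1, 1], ![-3, 3, -3, -3, -3, 1, 1, 1], ![3, -3, -3, -3, -3, 1, 1, 1]}

theorem four_dvd_dotProduct_twiceE6root :
    ∀ j, ∀ v ∈ minusculeOrbitE6, 4 ∣ v ⬝ᵥ twiceE6root j := by
  decide

theorem reflInt_mem_minusculeOrbitE6 :
    ∀ j, ∀ v ∈ minusculeOrbitE6, reflInt j v ∈ minusculeOrbitE6 := by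
  decide

theorem foldr_reflInt_mem_minusculeOrbitE6 (L : List (Fin 6)) {v : Fin 8 → ℤ}
    (hv : v ∈ minusculeOrbitE6) : L.foldr reflInt v ∈ minusculeOrbitE6 := by
  induction L with
  | nil => exact hv
  | cons j L ih => exact reflInt_mem_minusculeOrbitE6 j _ ih

theorem reflE6_toE8_of_mem {j : Fin 6} {v : Fin 8 → ℤ} (hv : v ∈ minusculeOrbitE6) :
    reflE6 j (toE8 v) = toE8 (reflInt j v) :=
  reflE6_toE8 (four_dvd_dotProduct_twiceE6root j v hv)

theorem mapsTo_reflE6_minusculeOrbitE6 (j : Fin 6) :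
    Set.MapsTo (reflE6 j) (toE8 '' minusculeOrbitE6) (toE8 '' minusculeOrbitE6) := by
  rintro _ ⟨v, hv, rfl⟩
  exact ⟨reflInt j v, reflInt_mem_minusculeOrbitE6 j v hv, (reflE6_toE8_of_mem hv).symm⟩

theorem mapsTo_minusculeOrbitE6_of_mem_WeylE6 {w : E8Space ≃ₗᵢ[ℝ] E8Space} (hw : w ∈ WeylE6) :
    Set.MapsTo w (toE8 '' minusculeOrbitE6) (toE8 '' minusculeOrbitE6) := by
  rw [WeylE6_eq_closure_range_reflE6] at hw
  refine (minusculeOrbitE6.finite_toSet.image toE8).mapsTo_smul_of_mem_closure ?_ hw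
  rintro _ ⟨j, rfl⟩
  exact mapsTo_reflE6_minusculeOrbitE6 j

theorem prod_map_reflE6_toE8 (L : List (Fin 6)) {v : Fin 8 → ℤ} (hv : v ∈ minusculeOrbitE6) :
    (L.map reflE6).prod (toE8 v) = toE8 (L.foldr reflInt v) := by
  induction L with
  | nil => rfl
  | cons j L ih =>
    rw [List.map_cons, List.prod_cons, LinearIsometryEquiv.coe_mul, Function.comp_apply, ih,
      reflE6_toE8_of_mem (foldr_reflInt_mem_minusculeOrbitE6 L hv), List.foldr_cons]

def u2Int : Fin 8 → ℤ := ![-3, 3, 3, 3, 3, -1, -1, -1]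

def u6Int : Fin 8 → ℤ := ![3, 3, 3, 3, 3, 1, 1, 1]

theorem u2hatE6_eq : u2hatE6 = (4 * √3)⁻¹ • toE8 u2Int := by
  ext i
  fin_cases i <;> simp [u2hatE6, toE8, u2Int, div_eq_inv_mul]

theorem u6hatE6_eq : u6hatE6 = (4 * √3)⁻¹ • toE8 u6Int := by
  ext i
  fin_cases i <;> simp [u6hatE6, toE8, u6Int, div_eq_inv_mul]

theorem u6Int_mem_minusculeOrbitE6 : u6Int ∈ minusculeOrbitE6 := by
  decide

theorem dotProduct_u2Int_mem :
    ∀ v ∈ minusculeOrbitE6, u2Int ⬝ᵥ v ∈ ({-48, -12, 24} : Finset ℤ) := by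
  decide

theorem inner_u2hatE6_apply_u6hatE6 {w : E8Space ≃ₗᵢ[ℝ] E8Space} {v : Fin 8 → ℤ}
    (hw : w (toE8 u6Int) = toE8 v) : ⟪u2hatE6, w u6hatE6⟫ = (u2Int ⬝ᵥ v : ℤ) / 48 := by
  have h48 : (4 * √3) * (4 * √3) = 48 := by
    nlinarith [Real.mul_self_sqrt (show (0 : ℝ) ≤ 3 by norm_num)]
  rw [u2hatE6_eq, u6hatE6_eq, map_smul, hw, real_inner_smul_left, real_inner_smul_right,
    inner_toE8, ← mul_assoc, ← mul_inv, h48, inv_mul_eq_div]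

theorem exists_mem_WeylE6_inner_eq_of_word (L : List (Fin 6)) {n : ℤ}
    (hL : u2Int ⬝ᵥ L.foldr reflInt u6Int = n) :
    ∃ w ∈ WeylE6, ⟪u2hatE6, w u6hatE6⟫ = n / 48 :=
  ⟨_, prod_map_reflE6_mem_WeylE6 L,
    hL ▸ inner_u2hatE6_apply_u6hatE6 (prod_map_reflE6_toE8 L u6Int_mem_minusculeOrbitE6)⟩

theorem inner_u2hatE6_u6hatE6_orbit_eq :
    {t : ℝ | ∃ w ∈ WeylE6, ⟪u2hatE6, w u6hatE6⟫ = t} = {-1, -1/4, 1/2} := by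
  ext t
  constructor
  · rintro ⟨w, hw, rfl⟩
    obtain ⟨v, hv, hwv⟩ :=
      mapsTo_minusculeOrbitE6_of_mem_WeylE6 hw ⟨u6Int, u6Int_mem_minusculeOrbitE6, rfl⟩
    rw [inner_u2hatE6_apply_u6hatE6 hwv.symm]
    have hval := dotProduct_u2Int_mem v hv
    simp only [Finset.mem_insert, Finset.mem_singleton] at hval
    rcases hval with h | h | h <;> norm_num [h]
  · rintro (rfl | rfl | rfl)
    -- `L.foldr reflInt` applies the last letter of `L` first; this word sends `4√3 • û₆` to the
    -- lowest weight `−4√3 • û₂`.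
    · convert exists_mem_WeylE6_inner_eq_of_word [1, 2, 3, 4, 5, 0, 3, 4, 2, 3, 1, 2, 0, 3, 4, 5]
        (n := -48) (by decide) using 4
      norm_num
    · convert exists_mem_WeylE6_inner_eq_of_word [1, 2, 3, 4, 5] (n := -12) (by decide) using 4
      norm_num
    · convert exists_mem_WeylE6_inner_eq_of_word [] (n := 24) (by decide) using 4
      norm_num
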